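/- Let n be a positive integer with n ≡ 3 (mod 4), let m be a nonnegative integer with (n, m) ≠ (3, 1), and set e := m² + m + (n+1)/4. Then every pair of positive integers (a, b) with a² − e·b² = 1 satisfies (2m+1)·a < 2e·b. -/

import Mathlib

/-!
Since `(2m+1)² = 4e − n`, the Pell equation turns `(2eb)² − ((2m+1)a)²` into `n(eb² + 1) − 4e`,
which is positive as soon as `b ≥ 2` or `n ≥ 7`. In the remaining case `b = 1`, `n = 3` it is
positive for `m = 0`, while for `m ≥ 2` the equation would make `m² + m + 2` a perfect square,
although it lies strictly between `m²` and `(m+1)²`.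
-/

lemma Int.sq_ne_of_lt_of_lt {m x : ℤ} (hm : 0 ≤ m) (hl : m ^ 2 < x) (hr : x < (m + 1) ^ 2)
    (a : ℤ) : a ^ 2 ≠ x := by
  rintro rfl
  have hlow : |m| < |a| := sq_lt_sq.mp hl
  have hup : |a| < |m + 1| := sq_lt_sq.mp hr
  rw [abs_of_nonneg hm] at hlow
  rw [abs_of_nonneg (by omega : 0 ≤ m + 1)] at hup
  omega

lemma sq_sub_sq_eq_of_pell {m k e a b : ℤ} (he : e = m ^ 2 + m + k)
    (hp : a ^ 2 - e * b ^ 2 = 1) :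
    (2 * e * b) ^ 2 - ((2 * m + 1) * a) ^ 2 = (4 * k - 1) * (e * b ^ 2 + 1) - 4 * e := by
  subst he
  linear_combination (-(2 * m + 1) ^ 2) * hp

lemma four_mul_lt_of_pell {m k e a b : ℤ} (hm : 0 ≤ m) (hk : 1 ≤ k) (hmk : ¬(k = 1 ∧ m = 1))
    (he : e = m ^ 2 + m + k) (hb : 0 < b) (hp : a ^ 2 - e * b ^ 2 = 1) :
    4 * e < (4 * k - 1) * (e * b ^ 2 + 1) := by
  have he1 : 1 ≤ e := by nlinarith
  obtain rfl | hb2 : b = 1 ∨ 2 ≤ b := by omega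
  · obtain rfl | hk2 : k = 1 ∨ 2 ≤ k := by omega
    · obtain rfl | hm2 : m = 0 ∨ 2 ≤ m := by omega
      · subst he; norm_num
      · have ha : a ^ 2 = m ^ 2 + m + 2 := by linear_combination hp + he
        exact absurd ha (Int.sq_ne_of_lt_of_lt hm (by nlinarith) (by nlinarith) a)
    · nlinarith
  · nlinarith [mul_le_mul_of_nonneg_left (pow_le_pow_left₀ (by norm_num) hb2 2)
      (by positivity : (0 : ℤ) ≤ e)]

theorem slope_bound_pell_one_divisibility_two_general
    (n m : ℤ) (hn : 0 < n) (hn4 : n % 4 = 3) (hm : 0 ≤ m) (hne : ¬ (n = 3 ∧ m = 1))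
    (e : ℤ) (he : e = m ^ 2 + m + (n + 1) / 4)
    (a b : ℤ) (hb : 0 < b) (hp : a ^ 2 - e * b ^ 2 = 1) :
    (2 * m + 1) * a < 2 * e * b := by
  set k := (n + 1) / 4
  have hnk : n = 4 * k - 1 := by omega
  have hk : 1 ≤ k := by omega
  have hmk : ¬(k = 1 ∧ m = 1) := fun ⟨hk1, hm1⟩ => hne ⟨by omega, hm1⟩
  have he0 : 0 ≤ e := by nlinarith
  refine lt_of_pow_lt_pow_left₀ 2 (by positivity) ?_
  linarith [sq_sub_sq_eq_of_pell he hp, four_mul_lt_of_pell hm hk hmk he hb hp]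

/-- For `n ≡ 3 (mod 4)` positive, `m ≥ 0` with `(n, m) ≠ (3, 1)`, and
`e = m² + m + (n+1)/4`, every positive solution `(a, b)` of `a² − e·b² = 1` satisfies
`(2m+1)·a < 2e·b`. -/
theorem slope_bound_pell_one_divisibility_two
    (n m : ℤ) (hn : 0 < n) (hn4 : n % 4 = 3) (hm : 0 ≤ m) (hne : ¬ (n = 3 ∧ m = 1))
    (e : ℤ) (he : e = m ^ 2 + m + (n + 1) / 4)
    (a b : ℤ) (ha : 0 < a) (hb : 0 < b) (hp : a ^ 2 - e * b ^ 2 = 1) :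
    (2 * m + 1) * a < 2 * e * b :=
  slope_bound_pell_one_divisibility_two_general n m hn hn4 hm hne e he a b hb hp
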